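/- arXiv:1410.3656 — 2 statements merged into one kernel-verified Lean document; each statement's English description precedes it below -/
import Mathlib

section
/- (Theorem 2a) Let G = D − VVᵀ be positive definite, where D is diagonal with positive diagonal and V is an n×k real matrix. Let a* ∈ ℤⁿ \ {0} minimize aᵀGa over nonzero integer vectors. Then either a* is a signed standard unit vector, or, setting x = Vᵀa* ∈ ℝᵏ, we have a* − (1/2)𝟙 < D⁻¹Vx < a* + (1/2)𝟙 componentwise, hence a* = round(D⁻¹Vx). -/
/-!
Perturbing the minimiser `a` by `±eᵢ` (allowed unless `a = ∓eᵢ`) and expanding the quadratic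
form gives `|2 (G a)ᵢ| ≤ Gᵢᵢ`. For `G = D - VVᵀ` and `t = D⁻¹VVᵀa` this reads
`2 Dᵢᵢ |aᵢ - tᵢ| ≤ Dᵢᵢ - ‖Vᵢ‖²`. If the row `Vᵢ` is nonzero, this gives `|aᵢ - tᵢ| < 1/2`; if it is
zero, then `tᵢ = 0` and the integer `aᵢ` satisfies `|aᵢ| ≤ 1/2`, so `aᵢ = 0`.
-/

open Matrix BigOperators

section QuadraticForm

variable {ι R : Type*} [Fintype ι]

theorem Matrix.IsSymm.vecMul_eq_mulVec [CommSemiring R] {G : Matrix ι ι R} (hG : G.IsSymm)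
    (x : ι → R) : x ᵥ* G = G *ᵥ x := by
  conv_lhs => rw [← hG.eq]
  exact vecMul_transpose G x

theorem Matrix.IsSymm.dotProduct_mulVec_add_single [DecidableEq ι] [CommRing R] {G : Matrix ι ι R}
    (hG : G.IsSymm) (x : ι → R) (i : ι) (c : R) :
    (x + Pi.single i c) ⬝ᵥ G *ᵥ (x + Pi.single i c) =
      x ⬝ᵥ G *ᵥ x + 2 * c * (G *ᵥ x) i + c ^ 2 * G i i := by
  have hx : x ⬝ᵥ G *ᵥ Pi.single i c = c * (G *ᵥ x) i := by
    rw [dotProduct_mulVec, hG.vecMul_eq_mulVec, dotProduct_single, mul_comm]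
  have hc : (G *ᵥ Pi.single i c) i = G i i * c := by
    simp [mulVec, dotProduct_single]
  simp only [mulVec_add, dotProduct_add, add_dotProduct, hx, single_dotProduct, hc]
  ring

end QuadraticForm

theorem Matrix.IsSymm.sub_mul_transpose_self {ι κ R : Type*} [Fintype κ] [CommRing R]
    {D : Matrix ι ι R} (hD : D.IsSymm) (V : Matrix ι κ R) : (D - V * Vᵀ).IsSymm := by
  rw [IsSymm, transpose_sub, transpose_mul, transpose_transpose, hD.eq]

theorem intCast_add_single {ι R : Type*} [DecidableEq ι] [Ring R] (a : ι → ℤ) (i : ι) (c : ℤ) :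
    (fun j => ((a + Pi.single i c : ι → ℤ) j : R)) = (fun j => (a j : R)) + Pi.single i (c : R) := by
  funext j
  rcases eq_or_ne j i with rfl | hj <;> simp [*]

section IntegerMinimizer

variable {ι : Type*} [Fintype ι] [DecidableEq ι] {G : Matrix ι ι ℝ}

theorem two_mul_mulVec_add_diag_nonneg_of_isMin (hG : G.IsSymm) {a : ι → ℤ}
    (hmin : ∀ b : ι → ℤ, b ≠ 0 →
      (fun j => (a j : ℝ)) ⬝ᵥ G *ᵥ (fun j => (a j : ℝ)) ≤
      (fun j => (b j : ℝ)) ⬝ᵥ G *ᵥ (fun j => (b j : ℝ)))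
    {i : ι} {c : ℤ} (hc : c ^ 2 = 1) (hb : a + Pi.single i c ≠ 0) :
    0 ≤ 2 * c * (G *ᵥ fun j => (a j : ℝ)) i + G i i := by
  have hcR : (c : ℝ) ^ 2 = 1 := by exact_mod_cast hc
  have := hmin _ hb
  rw [intCast_add_single, hG.dotProduct_mulVec_add_single, hcR, one_mul] at this
  linarith

theorem abs_two_mul_mulVec_le_diag_of_isMin (hG : G.IsSymm) {a : ι → ℤ}
    (hmin : ∀ b : ι → ℤ, b ≠ 0 →
      (fun j => (a j : ℝ)) ⬝ᵥ G *ᵥ (fun j => (a j : ℝ)) ≤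
      (fun j => (b j : ℝ)) ⬝ᵥ G *ᵥ (fun j => (b j : ℝ)))
    {i : ι} (h₁ : a ≠ Pi.single i 1) (h₂ : a ≠ -Pi.single i 1) :
    |2 * (G *ᵥ fun j => (a j : ℝ)) i| ≤ G i i := by
  have hpos := two_mul_mulVec_add_diag_nonneg_of_isMin hG hmin (c := 1) (by norm_num)
    (fun h => h₂ (eq_neg_of_add_eq_zero_left h))
  have hneg := two_mul_mulVec_add_diag_nonneg_of_isMin hG hmin (c := -1) (by norm_num)
    (fun h => h₁ (by rwa [Pi.single_neg, ← sub_eq_add_neg, sub_eq_zero] at h))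
  push_cast at hpos hneg
  rw [abs_le]
  constructor <;> linarith

end IntegerMinimizer

section Diagonal

variable {ι : Type*} [Fintype ι] [DecidableEq ι]

theorem Matrix.IsDiag.mulVec_apply {R : Type*} [NonUnitalNonAssocSemiring R] {D : Matrix ι ι R}
    (hD : D.IsDiag) (x : ι → R) (i : ι) : (D *ᵥ x) i = D i i * x i := by
  nth_rw 1 [← hD.diagonal_diag]
  rw [mulVec_diagonal, diag_apply]

theorem Matrix.IsDiag.inv_mulVec_apply {K : Type*} [Field K] {D : Matrix ι ι K}
    (hD : D.IsDiag) (hD₀ : ∀ j, D j j ≠ 0) (x : ι → K) (i : ι) :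
    (D⁻¹ *ᵥ x) i = x i / D i i := by
  have hunit : IsUnit D.diag := Pi.isUnit_iff.mpr fun j => (hD₀ j).isUnit
  have hinv : Ring.inverse D.diag i = (D i i)⁻¹ :=
    eq_inv_of_mul_eq_one_left (congrFun (Ring.inverse_mul_cancel _ hunit) i)
  nth_rw 1 [← hD.diagonal_diag]
  rw [inv_diagonal, mulVec_diagonal, hinv, inv_mul_eq_div]

end Diagonal

section Rounding

variable {K : Type*} [Field K] [LinearOrder K] [IsStrictOrderedRing K]

theorem abs_intCast_sub_div_lt_half {d s w : K} {a : ℤ} (hd : 0 < d) (hs : 0 ≤ s)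
    (hw : s = 0 → w = 0) (h : |2 * (d * a - w)| ≤ d - s) : |a - w / d| < 1 / 2 := by
  rcases hs.eq_or_lt with hs0 | hspos
  · have ha : a = 0 := by
      rw [hw hs0.symm, sub_zero, abs_mul, abs_mul, abs_two, abs_of_pos hd, ← hs0, sub_zero] at h
      have : |(a : K)| < 1 := by nlinarith
      exact Int.abs_lt_one_iff.mp (by exact_mod_cast this)
    simp [ha, hw hs0.symm]
  · have hsplit : (a : K) - w / d = (d * a - w) / d := by field_simp
    rw [hsplit, abs_div, abs_of_pos hd, div_lt_iff₀ hd]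
    rw [abs_mul, abs_two] at h
    linarith

variable [FloorRing K]

theorem eq_round_of_abs_sub_lt_half {n : ℤ} {t : K} (h : |n - t| < 1 / 2) : n = round t := by
  rw [eq_comm, round_eq_iff]
  rw [abs_sub_lt_iff] at h
  constructor <;> linarith

end Rounding

theorem stmt11_general {n k : ℕ} (D : Matrix (Fin n) (Fin n) ℝ) (hD : D.IsDiag)
    (hDpos : ∀ i, 0 < D i i) (V : Matrix (Fin n) (Fin k) ℝ)
    (a : Fin n → ℤ)
    (hmin : ∀ b : Fin n → ℤ, b ≠ 0 →
      (fun i => (a i : ℝ)) ⬝ᵥ (D - V * Vᵀ).mulVec (fun i => (a i : ℝ)) ≤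
      (fun i => (b i : ℝ)) ⬝ᵥ (D - V * Vᵀ).mulVec (fun i => (b i : ℝ))) :
    (∃ j, (∀ i, i ≠ j → a i = 0) ∧ (a j = 1 ∨ a j = -1)) ∨
    (∀ i,
      ((a i : ℝ) - 1 / 2 <
          (D⁻¹ * V).mulVec (Vᵀ.mulVec (fun l => (a l : ℝ))) i ∧
        (D⁻¹ * V).mulVec (Vᵀ.mulVec (fun l => (a l : ℝ))) i <
          (a i : ℝ) + 1 / 2) ∧
      a i = round ((D⁻¹ * V).mulVec (Vᵀ.mulVec (fun l => (a l : ℝ))) i)) := by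
  refine or_iff_not_imp_left.mpr fun hunit i => ?_
  set x : Fin n → ℝ := fun l => (a l : ℝ)
  set w := V *ᵥ (Vᵀ *ᵥ x)
  have hw : ((D⁻¹ * V) *ᵥ (Vᵀ *ᵥ x)) i = w i / D i i := by
    rw [← mulVec_mulVec, hD.inv_mulVec_apply fun j => (hDpos j).ne']
  have hGx : ((D - V * Vᵀ) *ᵥ x) i = D i i * a i - w i := by
    rw [sub_mulVec, ← mulVec_mulVec, Pi.sub_apply, hD.mulVec_apply]
  have hGii : (D - V * Vᵀ) i i = D i i - V i ⬝ᵥ V i := by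
    rw [Matrix.sub_apply, mul_apply']
    rfl
  have hwi : V i ⬝ᵥ V i = 0 → w i = 0 := fun h => by
    simp only [w, mulVec, dotProduct_self_eq_zero.mp h, zero_dotProduct]
  have h₁ : a ≠ Pi.single i 1 := fun h => hunit ⟨i, fun l hl => by simp [h, hl], by simp [h]⟩
  have h₂ : a ≠ -Pi.single i 1 := fun h => hunit ⟨i, fun l hl => by simp [h, hl], by simp [h]⟩
  have hperturb :=
    abs_two_mul_mulVec_le_diag_of_isMin (hD.isSymm.sub_mul_transpose_self V) hmin h₁ h₂
  rw [hGx, hGii] at hperturb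
  have hlt := abs_intCast_sub_div_lt_half (hDpos i)
    (Finset.sum_nonneg fun l _ => mul_self_nonneg (V i l)) hwi hperturb
  rw [hw]
  refine ⟨?_, eq_round_of_abs_sub_lt_half hlt⟩
  rw [abs_sub_lt_iff] at hlt
  constructor <;> linarith

theorem stmt11 {n k : ℕ} (D : Matrix (Fin n) (Fin n) ℝ) (hD : D.IsDiag)
    (hDpos : ∀ i, 0 < D i i) (V : Matrix (Fin n) (Fin k) ℝ)
    (hG : (D - V * Vᵀ).PosDef)
    (a : Fin n → ℤ) (ha : a ≠ 0)
    (hmin : ∀ b : Fin n → ℤ, b ≠ 0 →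
      (fun i => (a i : ℝ)) ⬝ᵥ (D - V * Vᵀ).mulVec (fun i => (a i : ℝ)) ≤
      (fun i => (b i : ℝ)) ⬝ᵥ (D - V * Vᵀ).mulVec (fun i => (b i : ℝ))) :
    (∃ j, (∀ i, i ≠ j → a i = 0) ∧ (a j = 1 ∨ a j = -1)) ∨
    (∀ i,
      ((a i : ℝ) - 1 / 2 <
          (D⁻¹ * V).mulVec (Vᵀ.mulVec (fun l => (a l : ℝ))) i ∧
        (D⁻¹ * V).mulVec (Vᵀ.mulVec (fun l => (a l : ℝ))) i <
          (a i : ℝ) + 1 / 2) ∧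
      a i = round ((D⁻¹ * V).mulVec (Vᵀ.mulVec (fun l => (a l : ℝ))) i)) :=
  stmt11_general D hD hDpos V a hmin
end

section
/- Let G = D − VVᵀ be positive definite with D diagonal and V an n×k matrix, and let a* ∈ ℤⁿ \ {0} minimize aᵀGa. Suppose a* has at least two nonzero coordinates. Then for every j: (a*_j + 1/2)·D_{jj} > (VVᵀa*)_j and (a*_j − 1/2)·D_{jj} < (VVᵀa*)_j. -/
open Matrix BigOperators

/-!
Moving the minimizer `a` by `±1` in coordinate `j` keeps it nonzero, because `a` has a nonzero
coordinate other than `j`. Expanding the quadratic form of the symmetric matrix `G = D - V Vᵀ`,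
minimality gives `2 |(G a)_j| ≤ G_jj`, where `(G a)_j = D_jj a_j - (V Vᵀ a)_j` and
`G_jj = D_jj - (V Vᵀ)_jj`. If `(V Vᵀ)_jj > 0` this is strictly stronger than the claim.
Otherwise row `j` of `V` vanishes, so `(V Vᵀ a)_j = 0` and the bound reads `|a_j| ≤ 1/2`,
forcing the integer `a_j` to be `0`.
-/

namespace Matrix

variable {ι ι' R : Type*}

theorem IsSymm.dotProduct_mulVec_comm [Fintype ι] [CommSemiring R] {G : Matrix ι ι R}
    (hG : G.IsSymm) (x y : ι → R) : x ⬝ᵥ G *ᵥ y = y ⬝ᵥ G *ᵥ x := by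
  rw [dotProduct_mulVec, ← vecMul_transpose, hG.eq, dotProduct_comm]

theorem IsSymm.dotProduct_mulVec_add_single_s12 [Fintype ι] [DecidableEq ι] [CommSemiring R]
    {G : Matrix ι ι R} (hG : G.IsSymm) (x : ι → R) (j : ι) (t : R) :
    (x + Pi.single j t) ⬝ᵥ G *ᵥ (x + Pi.single j t) =
      x ⬝ᵥ G *ᵥ x + 2 * t * (G *ᵥ x) j + t * t * G j j := by
  rw [mulVec_add, dotProduct_add, add_dotProduct, add_dotProduct,
    hG.dotProduct_mulVec_comm x (Pi.single j t), single_dotProduct, single_dotProduct,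
    mulVec_single]
  simp only [Pi.smul_apply, op_smul_eq_smul, smul_eq_mul, col_apply]
  ring

theorem IsDiag.mulVec_apply_s12 [Fintype ι] [DecidableEq ι] [NonUnitalNonAssocSemiring R]
    {D : Matrix ι ι R} (hD : D.IsDiag) (x : ι → R) (j : ι) : (D *ᵥ x) j = D j j * x j := by
  conv_lhs => rw [← hD.diagonal_diag]
  exact mulVec_diagonal _ _ _

theorem mul_transpose_self_apply_self [CommSemiring R] [Fintype ι'] (V : Matrix ι ι' R)
    (j : ι) : (V * Vᵀ) j j = V j ⬝ᵥ V j :=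
  rfl

theorem mul_transpose_self_mulVec_apply_eq_zero [CommRing R] [LinearOrder R]
    [IsStrictOrderedRing R] [Fintype ι] [Fintype ι'] {V : Matrix ι ι' R} {j : ι}
    (hV : (V * Vᵀ) j j = 0) (x : ι → R) : ((V * Vᵀ) *ᵥ x) j = 0 := by
  rw [mul_transpose_self_apply_self, dotProduct_self_eq_zero] at hV
  rw [← mulVec_mulVec]
  simp [mulVec, hV]

theorem mul_transpose_self_apply_self_nonneg [CommRing R] [LinearOrder R] [IsStrictOrderedRing R]
    [Fintype ι'] (V : Matrix ι ι' R) (j : ι) : 0 ≤ (V * Vᵀ) j j :=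
  Fintype.sum_nonneg fun _ => mul_self_nonneg _

def IsIntMinimizer [Fintype ι] (G : Matrix ι ι ℝ) (a : ι → ℤ) : Prop :=
  ∀ b : ι → ℤ, b ≠ 0 →
    (fun i => (a i : ℝ)) ⬝ᵥ G *ᵥ (fun i => (a i : ℝ)) ≤
    (fun i => (b i : ℝ)) ⬝ᵥ G *ᵥ (fun i => (b i : ℝ))

theorem IsIntMinimizer.abs_two_mul_mulVec_apply_le [Fintype ι] [DecidableEq ι]
    {G : Matrix ι ι ℝ} {a : ι → ℤ} (hmin : G.IsIntMinimizer a) (hG : G.IsSymm) {i j : ι}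
    (hij : i ≠ j) (hi : a i ≠ 0) :
    |2 * (G *ᵥ fun l => (a l : ℝ)) j| ≤ G j j := by
  have hstep (t : ℤ) : 0 ≤ 2 * t * (G *ᵥ fun l => (a l : ℝ)) j + t * t * G j j := by
    have hne : a + Pi.single j t ≠ 0 := fun h => hi (by simpa [hij] using congrFun h i)
    have hcast : (fun l => ((a + Pi.single j t : ι → ℤ) l : ℝ)) =
        (fun l => (a l : ℝ)) + Pi.single j (t : ℝ) := by
      ext l
      by_cases h : l = j <;> simp [h]
    have := hmin _ hne
    rw [hcast, hG.dotProduct_mulVec_add_single_s12] at this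
    linarith
  have h₁ := hstep 1
  have h₂ := hstep (-1)
  push_cast at h₁ h₂
  exact abs_le'.2 ⟨by linarith, by linarith⟩

end Matrix

theorem stmt12_general {n k : ℕ} (D : Matrix (Fin n) (Fin n) ℝ) (hD : D.IsDiag)
    (V : Matrix (Fin n) (Fin k) ℝ) (hG : (D - V * Vᵀ).PosDef)
    (a : Fin n → ℤ)
    (hmin : ∀ b : Fin n → ℤ, b ≠ 0 →
      (fun i => (a i : ℝ)) ⬝ᵥ (D - V * Vᵀ).mulVec (fun i => (a i : ℝ)) ≤
      (fun i => (b i : ℝ)) ⬝ᵥ (D - V * Vᵀ).mulVec (fun i => (b i : ℝ)))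
    (htwo : ∃ i j, i ≠ j ∧ a i ≠ 0 ∧ a j ≠ 0) :
    ∀ j, ((a j : ℝ) + 1 / 2) * D j j >
        (V * Vᵀ).mulVec (fun l => (a l : ℝ)) j ∧
      ((a j : ℝ) - 1 / 2) * D j j <
        (V * Vᵀ).mulVec (fun l => (a l : ℝ)) j := by
  intro j
  obtain ⟨i, hij, hi⟩ : ∃ i, i ≠ j ∧ a i ≠ 0 := by
    obtain ⟨i₁, i₂, h₁₂, h₁, h₂⟩ := htwo
    by_cases h : i₁ = j
    · exact ⟨i₂, h ▸ h₁₂.symm, h₂⟩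
    · exact ⟨i₁, h, h₁⟩
  have hbound := abs_le'.1 <| IsIntMinimizer.abs_two_mul_mulVec_apply_le hmin
    (isHermitian_iff_isSymm.1 hG.isHermitian) hij hi
  rw [sub_mulVec, Pi.sub_apply, hD.mulVec_apply_s12, Matrix.sub_apply] at hbound
  rcases (mul_transpose_self_apply_self_nonneg V j).eq_or_lt with hW | hW
  · have hw := mul_transpose_self_mulVec_apply_eq_zero hW.symm (fun l => (a l : ℝ))
    have hDpos : 0 < D j j := by
      have := hG.diag_pos (i := j)
      rwa [Matrix.sub_apply, ← hW, sub_zero] at this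
    rw [hw, ← hW, sub_zero, sub_zero] at hbound
    have haj : a j = 0 := by
      have : (2 * a j : ℝ) < 2 ∧ (-2 : ℝ) < 2 * a j := ⟨by nlinarith, by nlinarith⟩
      have : 2 * a j < 2 ∧ -2 < 2 * a j := by exact_mod_cast this
      omega
    rw [hw, haj, Int.cast_zero]
    constructor <;> linarith
  · constructor <;> linarith [hbound.1, hbound.2]

theorem stmt12 {n k : ℕ} (D : Matrix (Fin n) (Fin n) ℝ) (hD : D.IsDiag)
    (V : Matrix (Fin n) (Fin k) ℝ) (hG : (D - V * Vᵀ).PosDef)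
    (a : Fin n → ℤ) (ha : a ≠ 0)
    (hmin : ∀ b : Fin n → ℤ, b ≠ 0 →
      (fun i => (a i : ℝ)) ⬝ᵥ (D - V * Vᵀ).mulVec (fun i => (a i : ℝ)) ≤
      (fun i => (b i : ℝ)) ⬝ᵥ (D - V * Vᵀ).mulVec (fun i => (b i : ℝ)))
    (htwo : ∃ i j, i ≠ j ∧ a i ≠ 0 ∧ a j ≠ 0) :
    ∀ j, ((a j : ℝ) + 1 / 2) * D j j >
        (V * Vᵀ).mulVec (fun l => (a l : ℝ)) j ∧
      ((a j : ℝ) - 1 / 2) * D j j <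
        (V * Vᵀ).mulVec (fun l => (a l : ℝ)) j :=
  stmt12_general D hD V hG a hmin htwo
end
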